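/- arXiv:math/9803018 — 2 statements merged into one kernel-verified Lean document; each statement's English description precedes it below -/
import Mathlib

section
/- Fix m ≥ 0 and work in the ring R = ℚ[c][x_0, x_0^{-1}, x_1, x_2, …] (polynomial ring over ℚ in an indeterminate c and countably many variables x_i, with x_0 inverted). In the formal power series ring R[[z]] set F = Σ_{i≥0} x_i x_0^{i-1} z^i and F_m = Σ_{i=0}^{m} x_i x_0^{i-1} z^i (both have constant term 1), and for a power series u with constant term 1 define u^c := Σ_{n≥0} (c choose n)·(u − 1)^n, where (c choose n) = c(c−1)⋯(c−n+1)/n!. Then for every k ≥ 1 the coefficient of z^{m+k} in F^c − F_m^c equals x_0^m · P^{(c)}_{mk}(x_0, …, x_{m+k}). (This identifies the generating-function definition of the polynomials P^{(c)}_{mk} with their explicit partition-sum expansion.) -/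
/-!
Write `u − 1 = Σ_{i ≥ 1} aᵢ zⁱ`. By the multinomial theorem the coefficient of `z^N` in
`(u − 1)ⁿ` is a sum over multisets of `n` exponents with sum `N`, i.e. over partitions `π` of `N`
with `ℓ(π) = n`, weighted by the number `ℓ! / ∏ pᵢ!` of orderings of `π`. Hence the coefficient
of `z^N` in `u^c` is `Σ_π (c choose p₁, p₂, …) ∏_{j ∈ π} aⱼ`. For `F_m` only partitions with all
parts `≤ m` occur, and `F` agrees with `F_N` up to `z^N`, so the coefficient of `z^{m+k}` in
`F^c − F_m^c` is the sum over the partitions of `m + k` with a part `> m`. For `aᵢ = xᵢ x₀^{i−1}`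
the product is `x₀^{N−ℓ} ∏ xᵢ^{pᵢ}`, and a part `> m` forces `ℓ ≤ k`, so that
`x₀^{N−ℓ} = x₀^m x₀^{k−ℓ}`.
-/

open scoped Classical

noncomputable section

/-- The field `K = ℚ(c, x₀, x₁, x₂, …)`: fraction field of the polynomial ring over `ℚ`
in the indeterminate `c` (variable `none`) and the variables `xᵢ` (variables `some i`).
The ring `R = ℚ[c][x₀, x₀⁻¹, x₁, …]` of the statement embeds in it. -/
abbrev K : Type := FractionRing (MvPolynomial (Option ℕ) ℚ)

/-- The indeterminate `c`. -/
def cK : K := algebraMap (MvPolynomial (Option ℕ) ℚ) K (MvPolynomial.X none)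

/-- The variables `xᵢ`. -/
def xK (i : ℕ) : K := algebraMap (MvPolynomial (Option ℕ) ℚ) K (MvPolynomial.X (some i))

/-- Generalized binomial coefficient `(c choose n) = c(c−1)⋯(c−n+1)/n!`. -/
def gbinom (c : K) (n : ℕ) : K := (∏ i ∈ Finset.range n, (c - i)) / (n.factorial : K)

/-- For a power series `u` with constant term `1`, the power series
`u^c := Σ_{n≥0} (c choose n)·(u − 1)^n`; the coefficient of `z^j` only receives
contributions from `n ≤ j` since `u − 1` has zero constant term. -/
def fpow (c : K) (u : PowerSeries K) : PowerSeries K :=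
  PowerSeries.mk fun j =>
    ∑ n ∈ Finset.range (j + 1), gbinom c n * PowerSeries.coeff j ((u - 1) ^ n)

/-- `F = Σ_{i≥0} xᵢ x₀^{i−1} zⁱ` (with `x₀^{−1}` interpreted in the field `K`). -/
def Fser : PowerSeries K := PowerSeries.mk fun i => xK i * xK 0 ^ ((i : ℤ) - 1)

/-- `F_m = Σ_{i=0}^{m} xᵢ x₀^{i−1} zⁱ`. -/
def Fmser (m : ℕ) : PowerSeries K :=
  PowerSeries.mk fun i => if i ≤ m then xK i * xK 0 ^ ((i : ℤ) - 1) else 0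

/-- The generalized multinomial coefficient `(c choose p₁,…,p_{m+k})` attached to a
partition `π` of `n`: numerator `c(c−1)⋯(c−ℓ(π)+1)`, denominator `∏ pᵢ!`. -/
def partMultCoeff (c : K) {n : ℕ} (π : Nat.Partition n) : K :=
  (∏ j ∈ Finset.range (Multiset.card π.parts), (c - j)) /
    ∏ i ∈ Finset.Icc 1 n, ((π.parts.count i).factorial : K)

/-- The value of the partition-sum expansion of `P^{(c)}_{mk}` at the variables
`x₀, …, x_{m+k}` of `K`:
`Σ_π (c choose p₁,…,p_{m+k}) x₀^{p₀} x₁^{p₁} ⋯ x_{m+k}^{p_{m+k}}`,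
summed over partitions `π = (1^{p₁} 2^{p₂} ⋯)` of `m+k` with largest part `> m`,
where `p₀ = k − ℓ(π)`. -/
def Pval (c : K) (m k : ℕ) : K :=
  ∑ π ∈ Finset.univ.filter (fun π : Nat.Partition (m + k) => ∃ a ∈ π.parts, m < a),
    partMultCoeff c π * xK 0 ^ (k - Multiset.card π.parts) *
      ∏ i ∈ Finset.Icc 1 (m + k), xK i ^ (π.parts.count i)

open PowerSeries Finset

namespace Multiset

theorem prod_factorial_count_mul_countPerms {α : Type*} [DecidableEq α]
    (m : Multiset α) {s : Finset α} (hs : ∀ a ∈ m, a ∈ s) :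
    (∏ a ∈ s, (m.count a).factorial) * m.countPerms = (card m).factorial := by
  rw [countPerms, Finsupp.multinomial_eq_of_support_subset (s := s)
      fun a ha => hs a (mem_toFinset.1 ha)]
  simpa only [toFinsupp_apply, sum_count_eq_card hs] using
    Nat.multinomial_spec s m.toFinsupp

theorem prod_map_zpow_sub_one {G : Type*} [CommGroupWithZero G] {a : G} (ha : a ≠ 0)
    (t : Multiset ℕ) :
    (t.map fun i : ℕ => a ^ ((i : ℤ) - 1)).prod = a ^ ((t.sum : ℤ) - card t) := by
  induction t using Multiset.induction with
  | empty => simp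
  | cons i t ih =>
    rw [map_cons, prod_cons, ih, ← zpow_add₀ ha, sum_cons, card_cons]
    push_cast
    ring_nf

end Multiset

namespace Nat.Partition

theorem card_parts_le {N : ℕ} (π : N.Partition) : Multiset.card π.parts ≤ N := by
  simpa [π.parts_sum] using
    Multiset.card_nsmul_le_sum (s := π.parts) (a := 1) fun _ ha => π.parts_pos ha

theorem card_parts_le_of_mem_of_lt {m k : ℕ} (π : (m + k).Partition) {a : ℕ} (ha : a ∈ π.parts)
    (hma : m < a) : Multiset.card π.parts ≤ k := by
  obtain ⟨t, ht⟩ := Multiset.exists_cons_of_mem ha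
  have hsum := π.parts_sum
  have hcard := Multiset.card_nsmul_le_sum (s := t) (a := 1)
    fun _ hb => π.parts_pos (ht ▸ Multiset.mem_cons_of_mem hb)
  rw [ht] at hsum ⊢
  simp only [Multiset.sum_cons, Multiset.card_cons, smul_eq_mul, mul_one] at hsum hcard ⊢
  omega

end Nat.Partition

namespace PowerSeries

variable {R : Type*} [CommSemiring R]

theorem coeff_pow_eq_of_trunc_eq {f g : R⟦X⟧} {N : ℕ} (h : trunc (N + 1) f = trunc (N + 1) g)
    (n : ℕ) : coeff N (f ^ n) = coeff N (g ^ n) := by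
  rw [← coeff_coe_trunc_of_lt (Nat.lt_succ_self N), ← trunc_trunc_pow, h, trunc_trunc_pow,
    coeff_coe_trunc_of_lt (Nat.lt_succ_self N)]

theorem multiset_prod_map_monomial (v : ℕ → R) (t : Multiset ℕ) :
    (t.map fun i => monomial i (v i)).prod = monomial t.sum (t.map v).prod := by
  induction t using Multiset.induction with
  | empty => simp
  | cons a t ih => simp [ih, monomial_mul_monomial]

theorem coeff_sum_monomial_pow (s : Finset ℕ) (v : ℕ → R) (n N : ℕ) :
    coeff N ((∑ i ∈ s, monomial i (v i)) ^ n) =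
      ∑ σ ∈ s.sym n with σ.val.sum = N, (σ.val.countPerms : R) * (σ.val.map v).prod := by
  rw [sum_pow, map_sum, sum_filter]
  refine sum_congr rfl fun σ _ => ?_
  rw [multiset_prod_map_monomial, ← map_natCast (C (R := R)), coeff_C_mul, coeff_monomial,
    mul_ite, mul_zero]
  simp only [eq_comm]

theorem sum_mul_coeff_sum_monomial_pow_eq_sum_partitions (b v : ℕ → R) (M N : ℕ) :
    ∑ n ∈ range (N + 1), b n * coeff N ((∑ i ∈ Icc 1 M, monomial i (v i)) ^ n) =
      ∑ π : N.Partition with ∀ a ∈ π.parts, a ≤ M,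
        b (Multiset.card π.parts) * π.parts.countPerms * (π.parts.map v).prod := by
  simp_rw [coeff_sum_monomial_pow, mul_sum]
  rw [sum_sigma']
  symm
  refine sum_bij (fun π _ => ⟨Multiset.card π.parts, ⟨π.parts, rfl⟩⟩) ?_ ?_ ?_ ?_
  · intro π hπ
    simp only [mem_filter, mem_univ, true_and] at hπ
    refine mem_sigma.2 ⟨mem_range.2 (Nat.lt_succ_of_le π.card_parts_le),
      mem_filter.2 ⟨mem_sym_iff.2 fun a ha => mem_Icc.2 ⟨π.parts_pos ha, hπ a ha⟩, π.parts_sum⟩⟩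
  · intro π₁ _ π₂ _ h
    exact Nat.Partition.ext (congrArg (fun p : Σ n, Sym ℕ n => p.2.val) h)
  · rintro ⟨n, σ⟩ hσ
    simp only [mem_sigma, mem_filter, mem_sym_iff, mem_Icc] at hσ
    obtain ⟨-, hσM, hσN⟩ := hσ
    refine ⟨⟨σ.val, fun ha => (hσM _ ha).1, hσN⟩, ?_, ?_⟩
    · simpa using fun a ha => (hσM a ha).2
    · obtain ⟨t, rfl⟩ := σ
      rfl
  · intro π _
    rw [mul_assoc]

end PowerSeries

theorem gbinom_mul_countPerms (c : K) {N : ℕ} (π : N.Partition) :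
    gbinom c (Multiset.card π.parts) * π.parts.countPerms = partMultCoeff c π := by
  have hcount := π.parts.prod_factorial_count_mul_countPerms (s := Icc 1 N)
    fun a ha => mem_Icc.2 ⟨π.parts_pos ha, π.le_of_mem_parts ha⟩
  have hD : (∏ i ∈ Icc 1 N, ((π.parts.count i).factorial : K)) ≠ 0 :=
    prod_ne_zero_iff.2 fun i _ => Nat.cast_ne_zero.2 (Nat.factorial_ne_zero _)
  rw [gbinom, partMultCoeff, div_mul_eq_mul_div, div_eq_div_iff
    (Nat.cast_ne_zero.2 (Nat.factorial_ne_zero _)) hD, ← Nat.cast_prod, mul_assoc,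
    ← Nat.cast_mul, mul_comm π.parts.countPerms, hcount]

theorem coeff_fpow_eq_of_trunc_eq (c : K) {u w : K⟦X⟧} {N : ℕ}
    (h : trunc (N + 1) u = trunc (N + 1) w) : coeff N (fpow c u) = coeff N (fpow c w) := by
  simp only [fpow, coeff_mk]
  have h' : trunc (N + 1) (u - 1) = trunc (N + 1) (w - 1) := by rw [trunc_sub, trunc_sub, h]
  simp only [coeff_pow_eq_of_trunc_eq h']

theorem xK_ne_zero (i : ℕ) : xK i ≠ 0 :=
  (map_ne_zero_iff _ (IsFractionRing.injective (MvPolynomial (Option ℕ) ℚ) K)).2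
    (MvPolynomial.X_ne_zero _)

def Fcoeff (i : ℕ) : K := xK i * xK 0 ^ ((i : ℤ) - 1)

theorem trunc_Fser_eq_trunc_Fmser (N : ℕ) : trunc (N + 1) Fser = trunc (N + 1) (Fmser N) := by
  ext i
  simp only [coeff_trunc, Fser, Fmser, coeff_mk]
  split_ifs <;> first | rfl | omega

theorem Fmser_sub_one (M : ℕ) : Fmser M - 1 = ∑ i ∈ Icc 1 M, monomial i (Fcoeff i) := by
  ext i
  simp only [map_sub, map_sum, coeff_monomial, sum_ite_eq, Fmser, coeff_mk, coeff_one, mem_Icc]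
  rcases Nat.eq_zero_or_pos i with rfl | hi
  · simp [mul_inv_cancel₀ (xK_ne_zero 0)]
  · rw [if_neg hi.ne', sub_zero]
    split_ifs <;> first | rfl | omega

theorem coeff_fpow_Fmser_eq_sum_partitions (c : K) (M N : ℕ) :
    coeff N (fpow c (Fmser M)) =
      ∑ π : N.Partition with ∀ a ∈ π.parts, a ≤ M,
        partMultCoeff c π * (π.parts.map Fcoeff).prod := by
  simp only [fpow, coeff_mk, Fmser_sub_one, sum_mul_coeff_sum_monomial_pow_eq_sum_partitions,
    gbinom_mul_countPerms]

theorem prod_map_Fcoeff {N : ℕ} (π : N.Partition) :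
    (π.parts.map Fcoeff).prod =
      xK 0 ^ ((N : ℤ) - Multiset.card π.parts) * ∏ i ∈ Icc 1 N, xK i ^ π.parts.count i := by
  have hsupp : π.parts.toFinset ⊆ Icc 1 N := fun a ha => by
    rw [Multiset.mem_toFinset] at ha
    exact mem_Icc.2 ⟨π.parts_pos ha, π.le_of_mem_parts ha⟩
  rw [show Fcoeff = fun i : ℕ => xK i * xK 0 ^ ((i : ℤ) - 1) from rfl, Multiset.prod_map_mul,
    Multiset.prod_map_zpow_sub_one (xK_ne_zero 0), π.parts_sum, prod_multiset_map_count,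
    mul_comm]
  congr 1
  exact prod_subset hsupp fun i _ hi => by
    rw [Multiset.count_eq_zero_of_notMem (by simpa using hi), pow_zero]

theorem coeff_fpow_sub_fpow_eq_general (m k : ℕ) :
    PowerSeries.coeff (m + k) (fpow cK Fser - fpow cK (Fmser m)) =
      xK 0 ^ m * Pval cK m k := by
  rw [map_sub, coeff_fpow_eq_of_trunc_eq cK (trunc_Fser_eq_trunc_Fmser (m + k)),
    coeff_fpow_Fmser_eq_sum_partitions, coeff_fpow_Fmser_eq_sum_partitions,
    filter_true_of_mem fun π _ a => π.le_of_mem_parts,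
    ← sum_filter_add_sum_filter_not univ fun π : (m + k).Partition => ∀ a ∈ π.parts, a ≤ m,
    add_sub_cancel_left, Pval, mul_sum]
  refine sum_congr (by simp) fun π hπ => ?_
  obtain ⟨a, ha, hma⟩ := (mem_filter.1 hπ).2
  have hexp : ((m + k : ℕ) : ℤ) - Multiset.card π.parts =
      (m + (k - Multiset.card π.parts) : ℕ) := by
    have := π.card_parts_le_of_mem_of_lt ha hma
    omega
  rw [prod_map_Fcoeff, hexp, zpow_natCast, pow_add]
  ring

/-- For every `m ≥ 0` and `k ≥ 1`, the coefficient of `z^{m+k}` in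
`F^c − F_m^c` equals `x₀^m · P^{(c)}_{mk}(x₀, …, x_{m+k})`. -/
theorem coeff_fpow_sub_fpow_eq (m k : ℕ) (hk : 1 ≤ k) :
    PowerSeries.coeff (m + k) (fpow cK Fser - fpow cK (Fmser m)) =
      xK 0 ^ m * Pval cK m k :=
  coeff_fpow_sub_fpow_eq_general m k

end
end

section
/- Let p be a prime and k ∈ ℤ_p with p-adic digit expansion k = Σ_{i≥0} k_i p^i where 0 ≤ k_i < p for all i (the sum converging in ℤ_p). Let q_1, …, q_r be nonnegative integers with base-p expansions q_j = Σ_{i≥0} q_{ji} p^i, 0 ≤ q_{ji} < p. Then: (1) (k choose q_1,…,q_r) ≡ Π_{i≥0} (k_i choose q_{1i},…,q_{ri}) (mod p·ℤ_p), where the product has only finitely many factors ≠ 1 and for natural numbers a, b_1,…,b_r the multinomial coefficient (a choose b_1,…,b_r) equals a!/(b_1!⋯b_r!·(a−Σb_j)!) if a ≥ Σb_j and 0 otherwise; (2) consequently, (k choose q_1,…,q_r) ≢ 0 (mod p·ℤ_p) if and only if k_i ≥ q_{1i} + ⋯ + q_{ri} for every i; and (3) in that case ν_p(q_j) ≥ ν_p(k)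 for every j with q_j ≠ 0, where ν_p denotes p-adic valuation. -/
/-- The multinomial coefficient `(a choose b₁,…,b_r) = a!/(b₁!⋯b_r!·(a−Σbⱼ)!)` for
natural numbers, equal to `0` if `a < Σbⱼ`. -/
def natMultinomial {r : ℕ} (a : ℕ) (b : Fin r → ℕ) : ℕ :=
  if (∑ j, b j) ≤ a then
    a.factorial / ((∏ j, (b j).factorial) * (a - ∑ j, b j).factorial)
  else 0

/-!
If `K ∈ ℕ` satisfies `K ≡ k (mod p^M)`, then `B · ∏ qⱼ!` and `natMultinomial K q · ∏ qⱼ!` are the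
falling factorial of length `Σ qⱼ` evaluated at `k` and at `K`, hence congruent mod `p^M`; once
`p^M > ∏ qⱼ!` this forces `B ≡ natMultinomial K q (mod p)`. Taking for `K` a long enough truncation
of the digit expansion of `k`, part (1) becomes Lucas' theorem for natural multinomial
coefficients, which follows one digit at a time from the binomial case and
`(a choose c, b) = (a choose c) · (a - c choose b)`. A digit factor `(kᵢ choose …)` with `kᵢ < p`
vanishes mod `p` exactly when it is `0`, which gives (2). For (3), the digit of `qⱼ` at
`v = ν_p(qⱼ)` is nonzero, so `kᵥ ≠ 0` and `p^(v+1)` does not divide `k`.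
-/

open Finset Nat

section NatMultinomial

variable {r : ℕ}

theorem natMultinomial_mul_prod_factorial (a : ℕ) (b : Fin r → ℕ) :
    natMultinomial a b * ∏ j, (b j)! = a.descFactorial (∑ j, b j) := by
  unfold natMultinomial
  split_ifs with h
  · have hdvd : ∏ j, (b j)! ∣ a.descFactorial (∑ j, b j) :=
      prod_factorial_dvd_factorial_sum _ _ |>.trans (factorial_dvd_descFactorial _ _)
    rw [← factorial_mul_descFactorial h, mul_comm (∏ j, _),
      Nat.mul_div_mul_left _ _ (factorial_pos _), Nat.div_mul_cancel hdvd]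
  · rw [zero_mul, eq_comm, descFactorial_eq_zero_iff_lt]
    omega

theorem natMultinomial_zero_right (a : ℕ) : natMultinomial a (0 : Fin r → ℕ) = 1 := by
  simpa using natMultinomial_mul_prod_factorial a (0 : Fin r → ℕ)

theorem natMultinomial_eq_choose_mul (a : ℕ) (b : Fin (r + 1) → ℕ) :
    natMultinomial a b = a.choose (b 0) * natMultinomial (a - b 0) (fun j => b j.succ) := by
  refine Nat.eq_of_mul_eq_mul_right
    (Finset.prod_pos fun j _ => factorial_pos (b j) : 0 < ∏ j, (b j)!) ?_
  rw [natMultinomial_mul_prod_factorial, Fin.prod_univ_succ, Fin.sum_univ_succ,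
    ← descFactorial_mul_descFactorial (Nat.le_add_right (b 0) _), Nat.add_sub_cancel_left,
    descFactorial_eq_factorial_mul_choose a, ← natMultinomial_mul_prod_factorial]
  ring

theorem natMultinomial_eq_zero_of_lt {a : ℕ} {b : Fin r → ℕ} (h : a < ∑ j, b j) :
    natMultinomial a b = 0 :=
  if_neg (not_le.mpr h)

variable {p : ℕ} [Fact p.Prime]

theorem natCast_natMultinomial_ne_zero_iff {a : ℕ} (b : Fin r → ℕ) (ha : a < p) :
    (natMultinomial a b : ZMod p) ≠ 0 ↔ ∑ j, b j ≤ a := by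
  refine ⟨fun h => not_lt.mp fun hlt => h (by rw [natMultinomial_eq_zero_of_lt hlt, cast_zero]),
    fun h => ?_⟩
  rw [Ne, ZMod.natCast_eq_zero_iff]
  intro hp
  have hfac : p ∣ a ! := hp.trans <| Dvd.intro _ (natMultinomial_mul_prod_factorial a b) |>.trans
    (Dvd.intro_left _ (factorial_mul_descFactorial h))
  rw [(Fact.out : p.Prime).dvd_factorial] at hfac
  omega

theorem natCast_choose_add_mul {a₀ c₀ : ℕ} (a₁ c₁ : ℕ) (ha : a₀ < p) (hc : c₀ < p) :
    ((a₀ + p * a₁).choose (c₀ + p * c₁) : ZMod p) = a₀.choose c₀ * a₁.choose c₁ := by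
  have hp : 0 < p := (Fact.out : p.Prime).pos
  have h := (ZMod.natCast_eq_natCast_iff _ _ _).mpr
    (Choose.choose_modEq_choose_mod_mul_choose_div_nat (n := a₀ + p * a₁) (k := c₀ + p * c₁)
      (p := p))
  simpa [Nat.add_mul_div_left _ _ hp, Nat.div_eq_of_lt ha, Nat.div_eq_of_lt hc,
    Nat.mod_eq_of_lt ha, Nat.mod_eq_of_lt hc] using h

theorem natCast_natMultinomial_add_mul {a₀ : ℕ} (a₁ : ℕ) {b₀ : Fin r → ℕ} (b₁ : Fin r → ℕ)
    (ha : a₀ < p) (hb : ∀ j, b₀ j < p) :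
    (natMultinomial (a₀ + p * a₁) (fun j => b₀ j + p * b₁ j) : ZMod p) =
      natMultinomial a₀ b₀ * natMultinomial a₁ b₁ := by
  induction r generalizing a₀ a₁ with
  | zero => simp [natMultinomial, Nat.div_self (factorial_pos _)]
  | succ r ih =>
    simp only [natMultinomial_eq_choose_mul _ (fun j => b₀ j + p * b₁ j),
      natMultinomial_eq_choose_mul a₀, natMultinomial_eq_choose_mul a₁, cast_mul,
      natCast_choose_add_mul a₁ (b₁ 0) ha (hb 0)]
    by_cases hle : b₀ 0 ≤ a₀ ∧ b₁ 0 ≤ a₁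
    · obtain ⟨⟨d₀, rfl⟩, ⟨d₁, rfl⟩⟩ :=
        And.intro (Nat.exists_eq_add_of_le hle.1) (Nat.exists_eq_add_of_le hle.2)
      have hsub : b₀ 0 + d₀ + p * (b₁ 0 + d₁) - (b₀ 0 + p * b₁ 0) = d₀ + p * d₁ := by
        rw [mul_add]; omega
      rw [hsub, ih d₁ (fun j => b₁ j.succ) (by omega) (fun j => hb j.succ)]
      simp only [Nat.add_sub_cancel_left]
      ring
    · have hzero : (a₀.choose (b₀ 0) * a₁.choose (b₁ 0) : ZMod p) = 0 := by
        rcases not_and_or.mp hle with h | h <;> simp [Nat.choose_eq_zero_of_lt (not_le.mp h)]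
      rw [hzero, zero_mul, mul_mul_mul_comm, hzero, zero_mul]

theorem natCast_natMultinomial_eq_prod_digits (N a : ℕ) {b : Fin r → ℕ}
    (hb : ∀ j, b j < p ^ N) :
    (natMultinomial a b : ZMod p) =
      ∏ i ∈ range N, (natMultinomial (a / p ^ i % p) (fun j => b j / p ^ i % p) : ZMod p) := by
  have hp : 0 < p := (Fact.out : p.Prime).pos
  induction N generalizing a b with
  | zero =>
    have : b = 0 := funext fun j => by simpa using hb j
    simp [this, natMultinomial_zero_right]
  | succ N ih =>
    have hb' : ∀ j, b j / p < p ^ N := fun j => by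
      rw [Nat.div_lt_iff_lt_mul hp, ← pow_succ]; exact hb j
    have hdecomp : natMultinomial a b =
        natMultinomial (a % p + p * (a / p)) (fun j => b j % p + p * (b j / p)) := by
      simp only [Nat.mod_add_div]
    rw [hdecomp, natCast_natMultinomial_add_mul _ _ (Nat.mod_lt _ hp) (fun j => Nat.mod_lt _ hp),
      ih _ hb', prod_range_succ']
    simp only [Nat.div_div_eq_div_mul, ← pow_succ', pow_zero, Nat.div_one]
    ring

end NatMultinomial

section Digits

variable {p : ℕ} {d : ℕ → ℕ}

theorem sum_range_mul_pow_lt (hd : ∀ i, d i < p) (n : ℕ) : ∑ i ∈ range n, d i * p ^ i < p ^ n := by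
  induction n with
  | zero => simp
  | succ n ih =>
    have := Nat.mul_le_mul_right (p ^ n) (hd n)
    rw [sum_range_succ, pow_succ]
    linarith

theorem sum_range_mul_pow_div_pow_mod (hd : ∀ i, d i < p) {n m : ℕ} (h : n < m) :
    (∑ i ∈ range m, d i * p ^ i) / p ^ n % p = d n := by
  obtain ⟨m, rfl⟩ : ∃ k, m = n + 1 + k := ⟨m - n - 1, by omega⟩
  have hp : 0 < p := (Nat.zero_le _).trans_lt (hd 0)
  have htail : ∑ i ∈ range m, d (n + 1 + i) * p ^ (n + 1 + i) =
      p ^ n * (p * ∑ i ∈ range m, d (n + 1 + i) * p ^ i) := by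
    rw [mul_sum, mul_sum]; refine sum_congr rfl fun i _ => by ring
  rw [sum_range_add, sum_range_succ, htail, add_assoc, mul_comm (d n), ← mul_add,
    Nat.add_mul_div_left _ _ (pow_pos hp n), Nat.div_eq_of_lt (sum_range_mul_pow_lt hd n),
    zero_add, Nat.add_mul_mod_self_left, Nat.mod_eq_of_lt (hd n)]

theorem sum_div_pow_mod_eq_zero {r N i : ℕ} {q : Fin r → ℕ} (hp : 0 < p) (hN : ∀ j, q j < p ^ N)
    (hi : N ≤ i) : ∑ j, q j / p ^ i % p = 0 := by
  have hq : ∀ j, q j / p ^ i = 0 := fun j =>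
    Nat.div_eq_of_lt ((hN j).trans_le (Nat.pow_le_pow_right hp hi))
  simp [hq]

theorem div_pow_padicValNat_mod_ne_zero [Fact p.Prime] {n : ℕ} (hn : n ≠ 0) :
    n / p ^ padicValNat p n % p ≠ 0 := fun h =>
  pow_succ_padicValNat_not_dvd hn <|
    pow_succ p _ ▸ Nat.mul_dvd_of_dvd_div pow_padicValNat_dvd (Nat.dvd_of_mod_eq_zero h)

end Digits

namespace PadicInt

variable {p : ℕ} [Fact p.Prime]

@[norm_cast]
theorem coe_prod {α : Type*} (s : Finset α) (f : α → ℤ_[p]) :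
    ((∏ z ∈ s, f z : ℤ_[p]) : ℚ_[p]) = ∏ z ∈ s, (f z : ℚ_[p]) :=
  map_prod Coe.ringHom f s

theorem natCast_pow_dvd_natCast_iff {m n : ℕ} : (p : ℤ_[p]) ^ m ∣ (n : ℤ_[p]) ↔ p ^ m ∣ n := by
  exact_mod_cast pow_p_dvd_int_iff (p := p) m n

theorem dvd_iff_toZMod_eq_zero {x : ℤ_[p]} : (p : ℤ_[p]) ∣ x ↔ toZMod x = 0 := by
  rw [← RingHom.mem_ker, ker_toZMod, maximalIdeal_eq_span_p, Ideal.mem_span_singleton]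

theorem summable_natCast_mul_pow (d : ℕ → ℕ) :
    Summable fun i => (d i : ℤ_[p]) * (p : ℤ_[p]) ^ i := by
  refine .of_norm_bounded
    (summable_geometric_of_lt_one (norm_nonneg _) ((norm_lt_one_iff_dvd (p : ℤ_[p])).mpr dvd_rfl))
    fun i => ?_
  rw [norm_mul, norm_pow]
  exact mul_le_of_le_one_left (by positivity) (norm_le_one _)

theorem pow_dvd_tsum_sub_sum (d : ℕ → ℕ) (m : ℕ) :
    (p : ℤ_[p]) ^ m ∣ ∑' i, (d i : ℤ_[p]) * (p : ℤ_[p]) ^ i -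
      ((∑ i ∈ range m, d i * p ^ i : ℕ) : ℤ_[p]) := by
  rw [← (summable_natCast_mul_pow d).sum_add_tsum_nat_add m]
  push_cast
  rw [add_sub_cancel_left]
  have hshift : ∀ i, (d (i + m) : ℤ_[p]) * (p : ℤ_[p]) ^ (i + m) =
      (d (i + m) * p ^ i) * p ^ m := fun i => by ring
  simp_rw [hshift, (summable_natCast_mul_pow fun i => d (i + m)).tsum_mul_right]
  exact dvd_mul_left _ _

theorem valuation_tsum_natCast_mul_pow_le {d : ℕ → ℕ} (hd : ∀ i, d i < p) {v : ℕ}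
    (hv : d v ≠ 0) : (∑' i, (d i : ℤ_[p]) * (p : ℤ_[p]) ^ i).valuation ≤ v := by
  set k := ∑' i, (d i : ℤ_[p]) * (p : ℤ_[p]) ^ i
  have hK : 0 < ∑ i ∈ range (v + 1), d i * p ^ i :=
    (Nat.mul_pos (Nat.pos_of_ne_zero hv) (pow_pos (Fact.out : p.Prime).pos v)).trans_le
      (single_le_sum (f := fun i => d i * p ^ i) (fun _ _ => Nat.zero_le _)
        (self_mem_range_succ v))
  by_contra! hlt
  have hk : k ≠ 0 := fun h => by simp [h] at hlt
  have hpk : (p : ℤ_[p]) ^ (v + 1) ∣ k :=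
    Ideal.mem_span_singleton.mp ((mem_span_pow_iff_le_valuation k hk _).mpr hlt)
  have hpK := dvd_sub hpk (pow_dvd_tsum_sub_sum d (v + 1))
  rw [sub_sub_cancel, natCast_pow_dvd_natCast_iff] at hpK
  exact (sum_range_mul_pow_lt hd (v + 1)).not_ge (Nat.le_of_dvd hK hpK)

theorem dvd_sub_natMultinomial {k B : ℤ_[p]} {r : ℕ} {q : Fin r → ℕ}
    (hB : B * ((∏ j, (q j)! : ℕ) : ℤ_[p]) = (descPochhammer ℤ_[p] (∑ j, q j)).eval k)
    {K M : ℕ} (hK : (p : ℤ_[p]) ^ M ∣ k - K) (hM : ∏ j, (q j)! < p ^ M) :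
    (p : ℤ_[p]) ∣ B - natMultinomial K q := by
  have hC : (natMultinomial K q : ℤ_[p]) * ((∏ j, (q j)! : ℕ) : ℤ_[p]) =
      (descPochhammer ℤ_[p] (∑ j, q j)).eval (K : ℤ_[p]) := by
    rw [descPochhammer_eval_eq_descFactorial, ← natMultinomial_mul_prod_factorial, Nat.cast_mul]
  have hdiff : (p : ℤ_[p]) ^ M ∣ (B - natMultinomial K q) * ((∏ j, (q j)! : ℕ) : ℤ_[p]) := by
    rw [sub_mul, hB, hC]
    exact hK.trans (Polynomial.sub_dvd_eval_sub _ _ _)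
  by_contra h
  have hF := natCast_pow_dvd_natCast_iff.mp (prime_p.pow_dvd_of_dvd_mul_left M h hdiff)
  exact hM.not_ge (Nat.le_of_dvd (prod_pos fun j _ => factorial_pos (q j)) hF)

theorem toZMod_eq_prod_natMultinomial_digits {d : ℕ → ℕ} (hd : ∀ i, d i < p) {B : ℤ_[p]}
    {r : ℕ} {q : Fin r → ℕ}
    (hB : B * ((∏ j, (q j)! : ℕ) : ℤ_[p]) =
      (descPochhammer ℤ_[p] (∑ j, q j)).eval (∑' i, (d i : ℤ_[p]) * (p : ℤ_[p]) ^ i))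
    {N : ℕ} (hN : ∀ j, q j < p ^ N) :
    toZMod B = ∏ i ∈ range N, (natMultinomial (d i) (fun j => q j / p ^ i % p) : ZMod p) := by
  -- `M ≥ N` keeps the first `N` digits of `k`, and `p ^ M > ∏ qⱼ!` lets the factorials cancel.
  set M := N + ∏ j, (q j)!
  have hM : ∏ j, (q j)! < p ^ M := (Nat.lt_pow_self (Fact.out : p.Prime).one_lt).trans_le
    (Nat.pow_le_pow_right (Fact.out : p.Prime).pos (Nat.le_add_left _ _))
  have hBK := dvd_sub_natMultinomial hB (pow_dvd_tsum_sub_sum d M) hM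
  rw [dvd_iff_toZMod_eq_zero, map_sub, sub_eq_zero, map_natCast] at hBK
  rw [hBK, natCast_natMultinomial_eq_prod_digits N _ hN]
  refine prod_congr rfl fun i hi => ?_
  rw [sum_range_mul_pow_div_pow_mod hd (by simp only [mem_range] at hi; omega)]

end PadicInt

/-- **Lucas' theorem for generalized p-adic multinomial coefficients.**
Let `k ∈ ℤ_p` with digit expansion `k = Σᵢ kᵢ pⁱ` (`0 ≤ kᵢ < p`), let `q₁,…,q_r` be
nonnegative integers, whose base-`p` digits are `qⱼᵢ = qⱼ/pⁱ % p`, and let `B ∈ ℤ_p` be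
the generalized multinomial coefficient `(k choose q₁,…,q_r)`.  Then:
(1) for any `N` with `qⱼ < p^N` for all `j`,
`B ≡ Πᵢ₌₀^{N−1} (kᵢ choose q₁ᵢ,…,q_rᵢ) (mod p·ℤ_p)` (the omitted factors are `1`);
(2) `B ≢ 0 (mod p·ℤ_p)` iff `kᵢ ≥ q₁ᵢ + ⋯ + q_rᵢ` for every `i`; and
(3) in that case, `ν_p(qⱼ) ≥ ν_p(k)` for every `j` with `qⱼ ≠ 0`. -/
theorem multinomial_lucas (p : ℕ) [Fact p.Prime] (k : ℤ_[p]) (kd : ℕ → ℕ)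
    (hkd : ∀ i, kd i < p) (hk : k = ∑' i, (kd i : ℤ_[p]) * (p : ℤ_[p]) ^ i)
    (r : ℕ) (q : Fin r → ℕ) (B : ℤ_[p])
    (hB : (B : ℚ_[p]) * ∏ i, ((q i).factorial : ℚ_[p]) =
      ∏ j ∈ Finset.range (∑ i, q i), ((k : ℚ_[p]) - j)) :
    (∀ N : ℕ, (∀ j, q j < p ^ N) →
      (p : ℤ_[p]) ∣
        (B - ∏ i ∈ Finset.range N,
          (natMultinomial (kd i) (fun j => q j / p ^ i % p) : ℤ_[p]))) ∧
    (¬ (p : ℤ_[p]) ∣ B ↔ ∀ i : ℕ, (∑ j, q j / p ^ i % p) ≤ kd i) ∧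
    ((∀ i : ℕ, (∑ j, q j / p ^ i % p) ≤ kd i) →
      ∀ j, q j ≠ 0 → (k : ℚ_[p]).valuation ≤ (padicValNat p (q j) : ℤ)) := by
  have hB' : B * ((∏ i, (q i)! : ℕ) : ℤ_[p]) = (descPochhammer ℤ_[p] (∑ i, q i)).eval k := by
    rw [descPochhammer_eval_eq_prod_range]
    apply Subtype.coe_injective
    exact_mod_cast hB
  subst hk
  have hp : p.Prime := Fact.out
  have hlucas := fun N (hN : ∀ j, q j < p ^ N) =>
    PadicInt.toZMod_eq_prod_natMultinomial_digits hkd hB' hN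
  have hQ : ∀ j, q j < p ^ ∑ i, q i := fun j =>
    (single_le_sum (fun _ _ => Nat.zero_le _) (mem_univ j)).trans_lt
      (Nat.lt_pow_self hp.one_lt)
  refine ⟨fun N hN => ?_, ?_, fun h j hj => ?_⟩
  · rw [PadicInt.dvd_iff_toZMod_eq_zero, map_sub, map_prod, sub_eq_zero, hlucas N hN]
    simp only [map_natCast]
  · rw [PadicInt.dvd_iff_toZMod_eq_zero, hlucas _ hQ, ← ne_eq, prod_ne_zero_iff]
    simp only [mem_range, natCast_natMultinomial_ne_zero_iff _ (hkd _)]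
    exact ⟨fun h i => (lt_or_ge i _).elim (h i)
      fun hi => (sum_div_pow_mod_eq_zero hp.pos hQ hi).trans_le (Nat.zero_le _),
      fun h i _ => h i⟩
  · rw [PadicInt.valuation_coe, Nat.cast_le]
    refine PadicInt.valuation_tsum_natCast_mul_pow_le hkd (Nat.pos_iff_ne_zero.mp ?_)
    exact (Nat.pos_of_ne_zero (div_pow_padicValNat_mod_ne_zero hj)).trans_le
      ((single_le_sum (fun _ _ => Nat.zero_le _) (mem_univ j)).trans (h _))
end
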